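/- Let k be a field of characteristic p > 0 with p ≥ n, and let X be an n × n strictly upper triangular matrix over k. Then log(exp(X)) = X, where exp(X) = Σ_{k=0}^{n-1} X^k/k! and log(1+Y) = Σ_{k=1}^{n-1} (-1)^{k-1} Y^k / k. -/

import Mathlib

/-!
In `K[X]` let `E` and `L` be the truncations of `exp` and `log (1 + ·)` below degree `n`; only
`1, …, n - 1` are inverted, so they make sense once these are nonzero in `K`. The polynomial
`F = L ∘ (E - 1) - X` has no constant term, and modulo `X ^ (n - 1)` we have `E' ≡ E` and
`E · L' ∘ (E - 1) ≡ 1`, whence `E · F' ≡ 0`. As `E` is a unit modulo `X`, this forces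
`X ^ (n - 1) ∣ F'`, and integrating (again dividing only by `1, …, n - 1`) gives `X ^ n ∣ F`.
A strictly upper triangular `n × n` matrix satisfies `X ^ n = 0`, so evaluating `F` at it
gives `log (exp X) = X`.
-/

open Polynomial Finset

namespace Polynomial

theorem X_pow_succ_dvd_of_X_pow_dvd_derivative {R : Type*} [Semiring R] [NoZeroDivisors R]
    {n : ℕ} (hR : ∀ m : ℕ, 0 < m → m < n + 1 → (m : R) ≠ 0) {F : R[X]} (hF0 : F.coeff 0 = 0)
    (hF' : X ^ n ∣ derivative F) : X ^ (n + 1) ∣ F := by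
  refine X_pow_dvd_iff.mpr fun d hd => ?_
  cases d with
  | zero => exact hF0
  | succ d =>
    have h := X_pow_dvd_iff.mp hF' d (by omega)
    rw [coeff_derivative] at h
    exact (mul_eq_zero.mp h).resolve_right (by exact_mod_cast hR (d + 1) d.succ_pos hd)

theorem aeval_eq_zero_of_X_pow_dvd {R A : Type*} [CommSemiring R] [Semiring A] [Algebra R A]
    {M : A} {n : ℕ} (hM : M ^ n = 0) {f : R[X]} (hf : X ^ n ∣ f) : aeval M f = 0 := by
  obtain ⟨g, rfl⟩ := hf
  rw [map_mul, map_pow, aeval_X, hM, zero_mul]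

section TruncatedSeries

variable (K : Type*) [Field K]

noncomputable def truncExp (n : ℕ) : K[X] :=
  ∑ m ∈ range n, ((m.factorial : K))⁻¹ • X ^ m

noncomputable def truncLog (n : ℕ) : K[X] :=
  ∑ k ∈ Icc 1 (n - 1), ((-1 : K) ^ (k - 1) / (k : K)) • X ^ k

variable {K}

theorem aeval_truncExp {A : Type*} [Ring A] [Algebra K A] (M : A) (n : ℕ) :
    aeval M (truncExp K n) = ∑ m ∈ range n, ((m.factorial : K))⁻¹ • M ^ m := by
  simp [truncExp]

theorem aeval_truncLog {A : Type*} [Ring A] [Algebra K A] (M : A) (n : ℕ) :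
    aeval M (truncLog K n) = ∑ k ∈ Icc 1 (n - 1), ((-1 : K) ^ (k - 1) / (k : K)) • M ^ k := by
  simp [truncLog]

theorem coeff_zero_truncExp (n : ℕ) : (truncExp K (n + 1)).coeff 0 = 1 := by
  simp [truncExp, coeff_X_pow]

theorem coeff_zero_truncLog (n : ℕ) : (truncLog K n).coeff 0 = 0 := by
  simp [truncLog, coeff_X_pow]

theorem derivative_truncExp_succ {n : ℕ} (hK : ∀ m : ℕ, 0 < m → m < n + 1 → (m : K) ≠ 0) :
    derivative (truncExp K (n + 1)) = truncExp K n := by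
  rw [truncExp, map_sum, sum_range_succ', truncExp]
  simp only [derivative_smul, derivative_X_pow, pow_zero, derivative_one, smul_zero, add_zero]
  refine sum_congr rfl fun m hm => ?_
  have hm1 : ((m + 1 : ℕ) : K) ≠ 0 := hK (m + 1) m.succ_pos (by simpa using hm)
  rw [Nat.factorial_succ, Nat.cast_mul, Nat.add_sub_cancel, ← smul_eq_C_mul, smul_smul]
  congr 1
  field_simp

theorem one_add_X_mul_derivative_truncLog_succ {n : ℕ}
    (hK : ∀ m : ℕ, 0 < m → m < n + 1 → (m : K) ≠ 0) :
    (1 + X) * derivative (truncLog K (n + 1)) = 1 - (-X) ^ n := by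
  have h : derivative (truncLog K (n + 1)) = ∑ j ∈ range n, (-X) ^ j := by
    rw [truncLog, map_sum, Nat.add_sub_cancel, ← Ico_add_one_right_eq_Icc, sum_Ico_eq_sum_range,
      Nat.add_sub_cancel]
    refine sum_congr rfl fun j hj => ?_
    have hj1 : ((1 + j : ℕ) : K) ≠ 0 := hK (1 + j) (by omega) (by simpa [add_comm] using hj)
    rw [derivative_smul, derivative_X_pow, Nat.add_sub_cancel_left, ← smul_eq_C_mul, smul_smul,
      div_mul_cancel₀ _ hj1, neg_pow (X : K[X]), smul_eq_C_mul, C_pow, C_neg, C_1]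
  rw [h]
  linear_combination (-1 : K[X]) * geom_sum_mul (-X : K[X]) n

theorem X_pow_dvd_truncLog_comp_truncExp_sub_X {n : ℕ}
    (hK : ∀ m : ℕ, 0 < m → m < n → (m : K) ≠ 0) :
    X ^ n ∣ (truncLog K n).comp (truncExp K n - 1) - X := by
  rcases n with _ | n
  · exact pow_zero (X : K[X]) ▸ one_dvd _
  set E := truncExp K (n + 1)
  set F := (truncLog K (n + 1)).comp (E - 1) - X
  have hE0 : E.coeff 0 = 1 := coeff_zero_truncExp n
  have hF0 : F.coeff 0 = 0 := by
    rw [coeff_sub, coeff_X_zero, sub_zero, coeff_zero_eq_eval_zero, eval_comp, eval_sub, eval_one,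
      ← coeff_zero_eq_eval_zero, hE0, sub_self, ← coeff_zero_eq_eval_zero, coeff_zero_truncLog]
  have hlog : E * (derivative (truncLog K (n + 1))).comp (E - 1) = 1 - (1 - E) ^ n := by
    have h := congrArg (comp · (E - 1)) (one_add_X_mul_derivative_truncLog_succ hK)
    simp only [mul_comp, add_comp, sub_comp, one_comp, X_comp, pow_comp, neg_comp] at h
    rwa [add_sub_cancel, neg_sub] at h
  have hexp : derivative E = E - ((n.factorial : K))⁻¹ • X ^ n := by
    rw [derivative_truncExp_succ hK, eq_sub_iff_add_eq]
    exact (sum_range_succ _ n).symm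
  have hEF : E * derivative F = -(((n.factorial : K))⁻¹ • X ^ n + (1 - E) ^ n * derivative E) := by
    rw [derivative_sub, derivative_comp, derivative_X, derivative_sub, derivative_one, sub_zero]
    linear_combination derivative E * hlog + hexp
  have hX_dvd : X ∣ 1 - E := X_dvd_iff.mpr (by rw [coeff_sub, coeff_one_zero, hE0, sub_self])
  have hX_not_dvd : ¬X ∣ E := by rw [X_dvd_iff, hE0]; exact one_ne_zero
  have hF' : X ^ n ∣ E * derivative F := by
    rw [hEF, dvd_neg, smul_eq_C_mul]
    exact dvd_add (dvd_mul_left _ _) ((pow_dvd_pow_of_dvd hX_dvd n).mul_right _)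
  exact X_pow_succ_dvd_of_X_pow_dvd_derivative hK hF0
    (prime_X.pow_dvd_of_dvd_mul_left n hX_not_dvd hF')

end TruncatedSeries

end Polynomial

namespace Matrix

theorem pow_apply_eq_zero_of_lt_add {R : Type*} [Semiring R] {n : ℕ}
    {M : Matrix (Fin n) (Fin n) R} (hM : ∀ i j : Fin n, j ≤ i → M i j = 0) (m : ℕ)
    {i j : Fin n} (hij : (j : ℕ) < i + m) :
    (M ^ m) i j = 0 := by
  induction m generalizing i with
  | zero => exact one_apply_ne' (by rintro rfl; omega)
  | succ m ih =>
    rw [pow_succ', mul_apply]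
    refine sum_eq_zero fun l _ => ?_
    rcases le_or_gt l i with hli | hil
    · rw [hM i l hli, zero_mul]
    · rw [ih (by omega), mul_zero]

theorem pow_eq_zero_of_forall_le_apply_eq_zero {R : Type*} [Semiring R] {n : ℕ}
    {M : Matrix (Fin n) (Fin n) R} (hM : ∀ i j : Fin n, j ≤ i → M i j = 0) : M ^ n = 0 := by
  ext i j
  exact pow_apply_eq_zero_of_lt_add hM n (by omega)

end Matrix

theorem stmt_2_general {K : Type*} [Field K] (p : ℕ) [CharP K p]
    (n : ℕ) (hn : n ≤ p)
    (X : Matrix (Fin n) (Fin n) K)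
    (hX : ∀ i j : Fin n, j ≤ i → X i j = 0) :
    ∑ k ∈ Finset.Icc 1 (n - 1), ((-1 : K) ^ (k - 1) / (k : K)) •
        ((∑ m ∈ Finset.range n, ((m.factorial : K))⁻¹ • X ^ m) - 1) ^ k = X := by
  have hK : ∀ m : ℕ, 0 < m → m < n → (m : K) ≠ 0 := fun m hm hmn hm0 =>
    absurd (Nat.le_of_dvd hm ((CharP.cast_eq_zero_iff K p m).mp hm0)) (by omega)
  have h := aeval_eq_zero_of_X_pow_dvd (Matrix.pow_eq_zero_of_forall_le_apply_eq_zero hX)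
    (X_pow_dvd_truncLog_comp_truncExp_sub_X hK)
  rwa [map_sub, aeval_X, sub_eq_zero, aeval_comp, map_sub, map_one, aeval_truncExp,
    aeval_truncLog] at h

/-- Let k be a field of characteristic p ≥ n and X an n × n strictly upper triangular
matrix.  Then log(exp X) = X, where exp(X) = Σ_{k<n} X^k/k! and
log(1+Y) = Σ_{k=1}^{n-1} (-1)^{k-1} Y^k / k. -/
theorem stmt_2 {K : Type*} [Field K] (p : ℕ) [Fact p.Prime] [CharP K p]
    (n : ℕ) (hn : n ≤ p)
    (X : Matrix (Fin n) (Fin n) K)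
    (hX : ∀ i j : Fin n, j ≤ i → X i j = 0) :
    ∑ k ∈ Finset.Icc 1 (n - 1), ((-1 : K) ^ (k - 1) / (k : K)) •
        ((∑ m ∈ Finset.range n, ((m.factorial : K))⁻¹ • X ^ m) - 1) ^ k = X :=
  stmt_2_general p n hn X hX
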